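/- For a real symmetric n×n matrix H, constant K > 0 and the dual norm N*[v,r] := (Σ_μ |E^μ v|²/((|μ|r)^{1/2}+(Kr²)^{1/3})²)^{1/2}, define N*[v] := inf{r > 0 : N*[v,r] < 1}. Then for all v, w ∈ ℝⁿ: (N*[v+w])^{1/2} ≤ (N*[v])^{1/2} + (N*[w])^{1/2}. -/

import Mathlib

/-!
For fixed `r`, `N*[·, r]` is a weighted Euclidean norm, hence subadditive. Moreover
`r ↦ √r · N*[u, r]` is nonincreasing, because each weight
`((|μ| r)^{1/2} + (K r²)^{1/3}) / √r` is nondecreasing: its `|μ|`-part is constant and its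
`K`-part grows like `r ^ (1/6)`. So if `N*[v, s] < 1` and `N*[w, t] < 1`, then
`r := (√s + √t) ^ 2` satisfies
`√r · N*[v + w, r] ≤ √s · N*[v, s] + √t · N*[w, t] < √s + √t = √r`, i.e. `N*[v + w, r] < 1`.
Letting `s` and `t` decrease to `N*[v]` and `N*[w]` gives the inequality.
-/

open scoped RealInnerProductSpace

noncomputable def Eproj {n : ℕ} (H : Matrix (Fin n) (Fin n) ℝ) (μ : ℝ) :
    EuclideanSpace ℝ (Fin n) →L[ℝ] EuclideanSpace ℝ (Fin n) :=
  (Module.End.eigenspace (Matrix.toEuclideanLin H) μ).subtypeL.comp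
    (Submodule.orthogonalProjection (Module.End.eigenspace (Matrix.toEuclideanLin H) μ))

/-- The nonisotropic norm `N[v,r]`, with the sum running over the eigenvalues of `H`. -/
noncomputable def Nnorm {n : ℕ} (H : Matrix (Fin n) (Fin n) ℝ) (hH : H.IsHermitian)
    (K : ℝ) (v : EuclideanSpace ℝ (Fin n)) (r : ℝ) : ℝ :=
  r⁻¹ * Real.sqrt (∑ μ ∈ Finset.image hH.eigenvalues Finset.univ,
    ‖Eproj H μ v‖ ^ 2 * (((abs μ) * r) ^ ((1:ℝ)/2) + (K * r ^ 2) ^ ((1:ℝ)/3)) ^ 2)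

/-- The dual nonisotropic norm `N*[v,r]`. -/
noncomputable def Ndual {n : ℕ} (H : Matrix (Fin n) (Fin n) ℝ) (hH : H.IsHermitian)
    (K : ℝ) (v : EuclideanSpace ℝ (Fin n)) (r : ℝ) : ℝ :=
  Real.sqrt (∑ μ ∈ Finset.image hH.eigenvalues Finset.univ,
    ‖Eproj H μ v‖ ^ 2 / (((abs μ) * r) ^ ((1:ℝ)/2) + (K * r ^ 2) ^ ((1:ℝ)/3)) ^ 2)

/-- `N*[v] = inf { r > 0 : N*[v,r] < 1 }`. -/
noncomputable def NdualInf {n : ℕ} (H : Matrix (Fin n) (Fin n) ℝ) (hH : H.IsHermitian)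
    (K : ℝ) (v : EuclideanSpace ℝ (Fin n)) : ℝ :=
  sInf {r : ℝ | 0 < r ∧ Ndual H hH K v r < 1}

lemma sqrt_sum_sq_add_le {ι : Type*} (s : Finset ι) (f g : ι → ℝ) :
    √(∑ i ∈ s, (f i + g i) ^ 2) ≤ √(∑ i ∈ s, f i ^ 2) + √(∑ i ∈ s, g i ^ 2) := by
  have h := norm_add_le (WithLp.toLp 2 fun i : s => f i) (WithLp.toLp 2 fun i : s => g i)
  simpa only [EuclideanSpace.norm_eq, ← WithLp.toLp_add, PiLp.toLp_apply, Pi.add_apply,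
    Real.norm_eq_abs, sq_abs, Finset.sum_coe_sort s (fun i => (f i + g i) ^ 2),
    Finset.sum_coe_sort s (fun i => f i ^ 2), Finset.sum_coe_sort s (fun i => g i ^ 2)] using h

lemma sqrt_sInf_le_add {A B C : Set ℝ} (hA : A.Nonempty) (hB : B.Nonempty)
    (hA₀ : ∀ s ∈ A, 0 ≤ s) (hB₀ : ∀ t ∈ B, 0 ≤ t) (hC₀ : ∀ r ∈ C, 0 ≤ r)
    (hABC : ∀ s ∈ A, ∀ t ∈ B, (√s + √t) ^ 2 ∈ C) :
    √(sInf C) ≤ √(sInf A) + √(sInf B) := by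
  obtain ⟨a, -, ha, haA⟩ := exists_seq_tendsto_sInf hA ⟨0, hA₀⟩
  obtain ⟨b, -, hb, hbB⟩ := exists_seq_tendsto_sInf hB ⟨0, hB₀⟩
  refine ge_of_tendsto' (ha.sqrt.add hb.sqrt) fun k => ?_
  calc √(sInf C) ≤ √((√(a k) + √(b k)) ^ 2) :=
        Real.sqrt_le_sqrt (csInf_le ⟨0, hC₀⟩ (hABC _ (haA k) _ (hbB k)))
    _ = √(a k) + √(b k) := Real.sqrt_sq (by positivity)

lemma sqrt_mul_rpow_third_le {K s r : ℝ} (hK : 0 ≤ K) (hs : 0 ≤ s) (hsr : s ≤ r) :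
    √r * (K * s ^ 2) ^ ((1:ℝ)/3) ≤ √s * (K * r ^ 2) ^ ((1:ℝ)/3) := by
  have hr : 0 ≤ r := hs.trans hsr
  have cube_root_pow_six : ∀ x : ℝ, 0 ≤ x → (x ^ ((1:ℝ)/3)) ^ 6 = x ^ 2 := by
    intro x hx
    rw [one_div, show (3:ℝ) = ((3:ℕ):ℝ) by norm_num, show 6 = 3 * 2 by rfl, pow_mul,
      Real.rpow_inv_natCast_pow hx (by norm_num)]
  refine (pow_le_pow_iff_left₀ (by positivity) (by positivity) (n := 6) (by norm_num)).mp ?_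
  rw [mul_pow, mul_pow, cube_root_pow_six _ (by positivity), cube_root_pow_six _ (by positivity),
    show 6 = 2 * 3 by rfl, pow_mul, pow_mul, Real.sq_sqrt hr, Real.sq_sqrt hs]
  have : 0 ≤ K ^ 2 * r ^ 3 * s ^ 3 := by positivity
  nlinarith [mul_le_mul_of_nonneg_left hsr this]

noncomputable def Ndenom (K μ r : ℝ) : ℝ :=
  (|μ| * r) ^ ((1:ℝ)/2) + (K * r ^ 2) ^ ((1:ℝ)/3)

lemma Ndenom_pos {K r : ℝ} (μ : ℝ) (hK : 0 < K) (hr : 0 < r) : 0 < Ndenom K μ r :=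
  add_pos_of_nonneg_of_pos (Real.rpow_nonneg (by positivity) _)
    (Real.rpow_pos_of_pos (by positivity) _)

lemma sqrt_mul_Ndenom_le_of_le {K s r : ℝ} (μ : ℝ) (hK : 0 ≤ K) (hs : 0 ≤ s) (hsr : s ≤ r) :
    √r * Ndenom K μ s ≤ √s * Ndenom K μ r := by
  have hr : 0 ≤ r := hs.trans hsr
  have eigen_part : √r * (|μ| * s) ^ ((1:ℝ)/2) = √s * (|μ| * r) ^ ((1:ℝ)/2) := by
    simp only [← Real.sqrt_eq_rpow, ← Real.sqrt_mul hr, ← Real.sqrt_mul hs]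
    ring_nf
  simp only [Ndenom, mul_add]
  exact add_le_add eigen_part.le (sqrt_mul_rpow_third_le hK hs hsr)

section Ndual

variable {n : ℕ} (H : Matrix (Fin n) (Fin n) ℝ) (hH : H.IsHermitian) {K : ℝ}

lemma Ndual_eq_sqrt_sum_sq (v : EuclideanSpace ℝ (Fin n)) (r : ℝ) :
    Ndual H hH K v r = √(∑ μ ∈ Finset.image hH.eigenvalues Finset.univ,
      (‖Eproj H μ v‖ / Ndenom K μ r) ^ 2) := by
  simp only [Ndual, Ndenom, div_pow]

lemma Ndual_add_le (v w : EuclideanSpace ℝ (Fin n)) (r : ℝ) :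
    Ndual H hH K (v + w) r ≤ Ndual H hH K v r + Ndual H hH K w r := by
  simp only [Ndual_eq_sqrt_sum_sq]
  refine (Real.sqrt_le_sqrt (Finset.sum_le_sum fun μ _ => ?_)).trans (sqrt_sum_sq_add_le _ _ _)
  rw [← add_div, div_pow, div_pow, map_add]
  gcongr
  exact norm_add_le _ _

lemma sqrt_mul_Ndual_le_of_le (hK : 0 < K) (u : EuclideanSpace ℝ (Fin n)) {s r : ℝ}
    (hs : 0 < s) (hsr : s ≤ r) :
    √r * Ndual H hH K u r ≤ √s * Ndual H hH K u s := by
  have hr : 0 < r := hs.trans_le hsr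
  simp only [Ndual_eq_sqrt_sum_sq, ← Real.sqrt_mul hr.le, ← Real.sqrt_mul hs.le, Finset.mul_sum]
  refine Real.sqrt_le_sqrt (Finset.sum_le_sum fun μ _ => ?_)
  have hDs := Ndenom_pos μ hK hs
  have hDr := Ndenom_pos μ hK hr
  have hweight : r * Ndenom K μ s ^ 2 ≤ s * Ndenom K μ r ^ 2 := by
    have := pow_le_pow_left₀ (by positivity) (sqrt_mul_Ndenom_le_of_le μ hK.le hs.le hsr) 2
    rwa [mul_pow, mul_pow, Real.sq_sqrt hr.le, Real.sq_sqrt hs.le] at this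
  calc r * (‖Eproj H μ u‖ / Ndenom K μ r) ^ 2
      = ‖Eproj H μ u‖ ^ 2 * (r / Ndenom K μ r ^ 2) := by ring
    _ ≤ ‖Eproj H μ u‖ ^ 2 * (s / Ndenom K μ s ^ 2) := by
      refine mul_le_mul_of_nonneg_left ?_ (by positivity)
      rwa [div_le_div_iff₀ (by positivity) (by positivity)]
    _ = s * (‖Eproj H μ u‖ / Ndenom K μ s) ^ 2 := by ring

lemma Ndual_add_lt_one (hK : 0 < K) (v w : EuclideanSpace ℝ (Fin n)) {s t : ℝ}
    (hs : 0 < s) (ht : 0 < t) (hv : Ndual H hH K v s < 1) (hw : Ndual H hH K w t < 1) :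
    Ndual H hH K (v + w) ((√s + √t) ^ 2) < 1 := by
  set r := (√s + √t) ^ 2
  have hsqrt_s := Real.sqrt_pos.mpr hs
  have hsqrt_t := Real.sqrt_pos.mpr ht
  have hsqrt_r : √r = √s + √t := Real.sqrt_sq (by positivity)
  have hsr : s ≤ r := (Real.sqrt_le_sqrt_iff (by positivity)).mp (by linarith)
  have htr : t ≤ r := (Real.sqrt_le_sqrt_iff (by positivity)).mp (by linarith)
  have key : √r * Ndual H hH K (v + w) r < √r * 1 :=
    calc √r * Ndual H hH K (v + w) r
        ≤ √r * Ndual H hH K v r + √r * Ndual H hH K w r := by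
          rw [← mul_add]; gcongr; exact Ndual_add_le H hH v w r
      _ ≤ √s * Ndual H hH K v s + √t * Ndual H hH K w t :=
          add_le_add (sqrt_mul_Ndual_le_of_le H hH hK v hs hsr)
            (sqrt_mul_Ndual_le_of_le H hH hK w ht htr)
      _ < √s + √t :=
          add_lt_add (mul_lt_of_lt_one_right hsqrt_s hv) (mul_lt_of_lt_one_right hsqrt_t hw)
      _ = √r * 1 := by rw [hsqrt_r, mul_one]
  exact lt_of_mul_lt_mul_left key (Real.sqrt_nonneg r)

end Ndual

theorem stmt5_general {n : ℕ} (H : Matrix (Fin n) (Fin n) ℝ) (hH : H.IsHermitian)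
    (K : ℝ) (hK : 0 < K) (v w : EuclideanSpace ℝ (Fin n))
    (hv : {r : ℝ | 0 < r ∧ Ndual H hH K v r < 1}.Nonempty)
    (hw : {r : ℝ | 0 < r ∧ Ndual H hH K w r < 1}.Nonempty) :
    (NdualInf H hH K (v + w)) ^ ((1:ℝ)/2) ≤
      (NdualInf H hH K v) ^ ((1:ℝ)/2) + (NdualInf H hH K w) ^ ((1:ℝ)/2) := by
  simp only [← Real.sqrt_eq_rpow]
  refine sqrt_sInf_le_add hv hw (fun _ h => h.1.le) (fun _ h => h.1.le) (fun _ h => h.1.le)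
    fun s hs t ht => ⟨?_, Ndual_add_lt_one H hH hK v w hs.1 ht.1 hs.2 ht.2⟩
  have := Real.sqrt_pos.mpr hs.1
  positivity

theorem stmt5 {n : ℕ} (H : Matrix (Fin n) (Fin n) ℝ) (hH : H.IsHermitian)
    (K : ℝ) (hK : 0 < K) (v w : EuclideanSpace ℝ (Fin n))
    (hv : {r : ℝ | 0 < r ∧ Ndual H hH K v r < 1}.Nonempty)
    (hw : {r : ℝ | 0 < r ∧ Ndual H hH K w r < 1}.Nonempty)
    (hvw : {r : ℝ | 0 < r ∧ Ndual H hH K (v + w) r < 1}.Nonempty)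
    (hv0 : 0 < NdualInf H hH K v) (hw0 : 0 < NdualInf H hH K w) :
    (NdualInf H hH K (v + w)) ^ ((1:ℝ)/2) ≤
      (NdualInf H hH K v) ^ ((1:ℝ)/2) + (NdualInf H hH K w) ^ ((1:ℝ)/2) :=
  stmt5_general H hH K hK v w hv hw
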